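/- arXiv:2409.13629 — 5 statements merged into one kernel-verified Lean document; each statement's English description precedes it below -/
import Mathlib

section
/- Let n ≥ 1, let x, h, η : Fin n → ℝ, and let δ ∈ ℝ with δ ≤ 1/2, |h_i| ≤ δ and |η_i| ≤ δ for all i. Define y_i = exp(x_i) / Σ_j exp(x_j) and ŷ_i = (exp(x_i + h_i)·(1 + η_i)) / Σ_j (exp(x_j + h_j)·(1 + η_j)). Then for every i, |ŷ_i − y_i| ≤ 16·δ. -/
open Real Finset

/-!
Write `exp (x j + h j) * (1 + η j) = exp (x j) * w j` with `w j = exp (h j) * (1 + η j)`.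
Every weight lies in `[m, M] = [exp (-δ) * (1 - δ), exp δ * (1 + δ)]`, so reweighting the
positive vector `exp ∘ x` by `w` changes each normalized entry by a factor between `m / M` and
`M / m`. Two numbers in `[0, 1]` that are within a factor `r ≤ 1` of each other differ by at
most `1 - r`, and `m / M ≥ (1 - 2δ)² ≥ 1 - 4δ`.
-/

theorem abs_sub_le_one_sub_of_mul_le {p q r : ℝ} (hp : p ≤ 1) (hq : q ≤ 1) (hr : r ≤ 1)
    (hpq : r * q ≤ p) (hqp : r * p ≤ q) : |p - q| ≤ 1 - r := by
  rw [abs_le]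
  constructor <;> nlinarith

section Reweighting

variable {ι : Type*} [Fintype ι] {a w : ι → ℝ} {m M : ℝ}

theorem mul_div_sum_le_div_sum_mul (ha : ∀ j, 0 < a j) (hm : 0 < m)
    (hw : ∀ j, w j ∈ Set.Icc m M) (i : ι) :
    m / M * (a i / ∑ j, a j) ≤ a i * w i / ∑ j, a j * w j := by
  have hsum_w : 0 < ∑ j, a j * w j :=
    sum_pos (fun j _ => mul_pos (ha j) (hm.trans_le (hw j).1)) ⟨i, mem_univ i⟩
  calc m / M * (a i / ∑ j, a j) = a i * m / (M * ∑ j, a j) := by field_simp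
    _ ≤ a i * w i / ∑ j, a j * w j := by
      refine div_le_div₀ (mul_pos (ha i) (hm.trans_le (hw i).1)).le
        (mul_le_mul_of_nonneg_left (hw i).1 (ha i).le) hsum_w ?_
      rw [mul_sum]
      exact sum_le_sum fun j _ => by nlinarith [(hw j).2, ha j]

theorem mul_div_sum_mul_le_div_sum (ha : ∀ j, 0 < a j) (hm : 0 < m)
    (hw : ∀ j, w j ∈ Set.Icc m M) (i : ι) :
    m / M * (a i * w i / ∑ j, a j * w j) ≤ a i / ∑ j, a j := by
  have hM : 0 < M := hm.trans_le ((hw i).1.trans (hw i).2)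
  calc m / M * (a i * w i / ∑ j, a j * w j) ≤ m / M * (a i * M / ∑ j, a j * m) := by
        gcongr
        · exact (mul_pos (ha i) hM).le
        · exact sum_pos (fun j _ => mul_pos (ha j) hm) ⟨i, mem_univ i⟩
        · exact (ha i).le
        · exact (hw i).2
        · exact (ha _).le
        · exact (hw _).1
    _ = a i / ∑ j, a j := by rw [← sum_mul]; field_simp

theorem abs_div_sum_mul_sub_div_sum_le (ha : ∀ j, 0 < a j) (hm : 0 < m)
    (hw : ∀ j, w j ∈ Set.Icc m M) (i : ι) :
    |a i * w i / ∑ j, a j * w j - a i / ∑ j, a j| ≤ 1 - m / M := by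
  have hwpos : ∀ j, 0 < a j * w j := fun j => mul_pos (ha j) (hm.trans_le (hw j).1)
  have hM : 0 < M := hm.trans_le ((hw i).1.trans (hw i).2)
  refine abs_sub_le_one_sub_of_mul_le ?_ ?_ ((div_le_one hM).2 ((hw i).1.trans (hw i).2))
    (mul_div_sum_le_div_sum_mul ha hm hw i) (mul_div_sum_mul_le_div_sum ha hm hw i)
  · exact div_le_one_of_le₀ (single_le_sum (fun j _ => (hwpos j).le) (mem_univ i))
      (sum_nonneg fun j _ => (hwpos j).le)
  · exact div_le_one_of_le₀ (single_le_sum (fun j _ => (ha j).le) (mem_univ i))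
      (sum_nonneg fun j _ => (ha j).le)

end Reweighting

theorem exp_mul_one_add_mem_Icc {h η δ : ℝ} (hh : |h| ≤ δ) (hη : |η| ≤ δ) (hδ : δ ≤ 1) :
    exp h * (1 + η) ∈ Set.Icc (exp (-δ) * (1 - δ)) (exp δ * (1 + δ)) := by
  obtain ⟨hh₁, hh₂⟩ := abs_le.1 hh
  obtain ⟨hη₁, hη₂⟩ := abs_le.1 hη
  constructor
  · gcongr
    linarith
  · gcongr
    linarith

theorem one_sub_four_mul_le_exp_mul_div_exp_mul {δ : ℝ} (hδ₀ : 0 ≤ δ) (hδ : δ ≤ 1 / 2) :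
    1 - 4 * δ ≤ exp (-δ) * (1 - δ) / (exp δ * (1 + δ)) := by
  have hexp : 1 - 2 * δ ≤ exp (-(2 * δ)) := by linarith [add_one_le_exp (-(2 * δ))]
  have hfrac : 1 - 2 * δ ≤ (1 - δ) / (1 + δ) := by
    rw [le_div_iff₀ (by linarith)]
    nlinarith
  calc 1 - 4 * δ ≤ (1 - 2 * δ) * (1 - 2 * δ) := by nlinarith
    _ ≤ exp (-(2 * δ)) * ((1 - δ) / (1 + δ)) := by gcongr; linarith
    _ = exp (-δ) * (1 - δ) / (exp δ * (1 + δ)) := by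
      rw [show -(2 * δ) = -δ - δ by ring, exp_sub]
      field_simp

theorem stmt_1_general (n : ℕ) (x h η : Fin n → ℝ) (δ : ℝ) (hδ : δ ≤ 1 / 2)
    (hh : ∀ i, |h i| ≤ δ) (hη : ∀ i, |η i| ≤ δ)
    (y yhat : Fin n → ℝ)
    (hy : ∀ i, y i = Real.exp (x i) / ∑ j, Real.exp (x j))
    (hyhat : ∀ i, yhat i = Real.exp (x i + h i) * (1 + η i) / ∑ j, Real.exp (x j + h j) * (1 + η j)) :
    ∀ i, |yhat i - y i| ≤ 16 * δ := by
  intro i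
  have hδ₀ : 0 ≤ δ := (abs_nonneg _).trans (hh i)
  have hw : ∀ j, exp (h j) * (1 + η j) ∈ Set.Icc (exp (-δ) * (1 - δ)) (exp δ * (1 + δ)) :=
    fun j => exp_mul_one_add_mem_Icc (hh j) (hη j) (by linarith)
  have hm : 0 < exp (-δ) * (1 - δ) := mul_pos (exp_pos _) (by linarith)
  have hclose := abs_div_sum_mul_sub_div_sum_le (fun j => exp_pos (x j)) hm hw i
  simp only [← mul_assoc, ← exp_add] at hclose
  rw [hy, hyhat]
  linarith [one_sub_four_mul_le_exp_mul_div_exp_mul hδ₀ hδ]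

/-- Error analysis of softmax: if the inputs are perturbed additively by `h i` with
`|h i| ≤ δ`, and each exponential is computed with relative error `η i` with `|η i| ≤ δ`,
where `δ ≤ 1/2`, then each output of softmax changes by at most `16 * δ`. -/
theorem stmt_1 (n : ℕ) (hn : 1 ≤ n) (x h η : Fin n → ℝ) (δ : ℝ) (hδ : δ ≤ 1 / 2)
    (hh : ∀ i, |h i| ≤ δ) (hη : ∀ i, |η i| ≤ δ)
    (y yhat : Fin n → ℝ)
    (hy : ∀ i, y i = Real.exp (x i) / ∑ j, Real.exp (x j))
    (hyhat : ∀ i, yhat i = Real.exp (x i + h i) * (1 + η i) / ∑ j, Real.exp (x j + h j) * (1 + η j)) :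
    ∀ i, |yhat i - y i| ≤ 16 * δ :=
  stmt_1_general n x h η δ hδ hh hη y yhat hy hyhat
end

section
/- Fix integers n ≥ 1 and K ≥ 1 and a function e : Fin n → ℤ. Define the relation R on Fin n by R i j ↔ |e i − e j| < K, and call k ∈ Fin n block-minimal if there is no j ∈ Fin n with e j < e k and |e k − e j| < K. Then for all i, j ∈ Fin n: i and j are related by the reflexive–transitive closure of R if and only if there is no block-minimal k ∈ Fin n such that (e i < e k and e k ≤ e j) or (e j < e k and e k ≤ e i). -/
/-- Characterization of blocks: `i` and `j` are related by the reflexive–transitive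
closure of `R i j ↔ |e i - e j| < K` iff there is no block-minimal `k` whose exponent
lies strictly between them (in the stated sense). -/
theorem stmt_7 (n : ℕ) (hn : 1 ≤ n) (K : ℤ) (hK : 1 ≤ K) (e : Fin n → ℤ)
    (R : Fin n → Fin n → Prop) (hR : ∀ i j, R i j ↔ |e i - e j| < K)
    (blockMinimal : Fin n → Prop)
    (hbm : ∀ k, blockMinimal k ↔ ¬ ∃ j : Fin n, e j < e k ∧ |e k - e j| < K) :
    ∀ i j : Fin n,
      Relation.ReflTransGen R i j ↔
        ¬ ∃ k : Fin n, blockMinimal k ∧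
            ((e i < e k ∧ e k ≤ e j) ∨ (e j < e k ∧ e k ≤ e i)) := by
  have aux : ∀ d : ℕ, ∀ i j : Fin n, e i ≤ e j → (e j - e i).toNat ≤ d →
      (¬ ∃ k : Fin n, blockMinimal k ∧ e i < e k ∧ e k ≤ e j) →
      Relation.ReflTransGen R i j := by
    intro d
    induction d with
    | zero =>
      intro i j hle h0 _
      exact Relation.ReflTransGen.single ((hR i j).2 (by rw [abs_sub_lt_iff]; omega))
    | succ d ih =>
      intro i j hle hd hnb
      by_cases hclose : |e i - e j| < K
      · exact Relation.ReflTransGen.single ((hR i j).2 hclose)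
      · have hgap : e i + K ≤ e j := by rw [abs_sub_lt_iff] at hclose; omega
        obtain ⟨m, hmS, hmin⟩ := Finset.exists_min_image
          (Finset.univ.filter (fun k => e i < e k ∧ e k ≤ e j)) e
          ⟨j, by simp; omega⟩
        simp only [Finset.mem_filter, Finset.mem_univ, true_and] at hmS
        obtain ⟨hm1, hm2⟩ := hmS
        have hmnotBM : ¬ blockMinimal m := fun h => hnb ⟨m, h, hm1, hm2⟩
        obtain ⟨j', hj'1, hj'2⟩ := not_not.mp (mt (hbm m).2 hmnotBM)
        have hj'le : e j' ≤ e i := by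
          by_contra hc
          push_neg at hc
          have hmem : j' ∈ Finset.univ.filter (fun k => e i < e k ∧ e k ≤ e j) := by
            simp only [Finset.mem_filter, Finset.mem_univ, true_and]
            omega
          have := hmin j' hmem
          omega
        have hRim : R i m := (hR i m).2 (by rw [abs_sub_lt_iff] at hj'2 ⊢; omega)
        refine Relation.ReflTransGen.head hRim (ih m j hm2 (by omega) ?_)
        rintro ⟨k, hk, hk1, hk2⟩
        exact hnb ⟨k, hk, by omega, hk2⟩
  have hsymm : Symmetric R := by
    intro a b hab
    rw [hR] at hab ⊢
    rwa [abs_sub_comm]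
  intro i j
  constructor
  · intro h
    induction h with
    | refl =>
      rintro ⟨k, hk, ⟨h1, h2⟩ | ⟨h1, h2⟩⟩ <;> omega
    | @tail b c hib hbc ih =>
      rintro ⟨k, hk, hcase⟩
      have hbcK : |e b - e c| < K := (hR b c).1 hbc
      rw [abs_sub_lt_iff] at hbcK
      rcases hcase with ⟨h1, h2⟩ | ⟨h1, h2⟩
      · by_cases hkb : e k ≤ e b
        · exact ih ⟨k, hk, Or.inl ⟨h1, hkb⟩⟩
        · exact (hbm k).1 hk ⟨b, by omega, by rw [abs_sub_lt_iff]; omega⟩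
      · by_cases hkb : e k ≤ e b
        · exact (hbm k).1 hk ⟨c, by omega, by rw [abs_sub_lt_iff]; omega⟩
        · exact ih ⟨k, hk, Or.inr ⟨by omega, by omega⟩⟩
  · intro hnb
    rcases le_total (e i) (e j) with h | h
    · refine aux (e j - e i).toNat i j h le_rfl ?_
      rintro ⟨k, hk, hk1, hk2⟩
      exact hnb ⟨k, hk, Or.inl ⟨hk1, hk2⟩⟩
    · have : Relation.ReflTransGen R j i := by
        refine aux (e i - e j).toNat j i h le_rfl ?_
        rintro ⟨k, hk, hk1, hk2⟩
        exact hnb ⟨k, hk, Or.inr ⟨hk1, hk2⟩⟩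
      exact (@Relation.ReflTransGen.symmetric _ R ⟨fun a b h => hsymm h⟩).symm _ _ this
end

section
/- Fix integers n ≥ 1 and K ≥ 1 and a function e : Fin n → ℤ, and define the relation R on Fin n by R i j ↔ |e i − e j| < K. Then for all i, j ∈ Fin n, if i and j are related by the reflexive–transitive closure of R, then |e i − e j| < n·K. -/
/-- Exponent spread within a block: if `i` and `j` are related by the reflexive–transitive
closure of `R i j ↔ |e i - e j| < K`, then `|e i - e j| < n·K`. -/
theorem stmt_8 (n : ℕ) (hn : 1 ≤ n) (K : ℤ) (hK : 1 ≤ K) (e : Fin n → ℤ)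
    (R : Fin n → Fin n → Prop) (hR : ∀ i j, R i j ↔ |e i - e j| < K) :
    ∀ i j : Fin n, Relation.ReflTransGen R i j → |e i - e j| < (n : ℤ) * K := by
  -- the simple graph with edges |e i - e j| < K
  set G : SimpleGraph (Fin n) :=
    { Adj := fun i j => i ≠ j ∧ |e i - e j| < K
      symm := by
        refine ⟨?_⟩; intro i j ⟨h1, h2⟩
        exact ⟨h1.symm, by rwa [abs_sub_comm]⟩
      loopless := by refine ⟨?_⟩; intro i h; exact h.1 rfl } with hG
  -- bound along any walk
  have key : ∀ (i j : Fin n) (w : G.Walk i j), |e i - e j| < ((w.length : ℤ) + 1) * K := by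
    intro i j w
    induction w with
    | nil => simpa using (lt_of_lt_of_le zero_lt_one hK)
    | @cons a b c h w ih =>
      have h1 : |e a - e b| < K := h.2
      calc |e a - e c| ≤ |e a - e b| + |e b - e c| := abs_sub_le _ _ _
        _ < K + ((w.length : ℤ) + 1) * K := by exact add_lt_add h1 ih
        _ = ((w.length : ℤ) + 1 + 1) * K := by ring
        _ = (((SimpleGraph.Walk.cons h w).length : ℤ) + 1) * K := by
            push_cast [SimpleGraph.Walk.length_cons]; ring
  intro i j hij
  -- get reachability
  have hreach : G.Reachable i j := by
    induction hij with
    | refl => exact SimpleGraph.Reachable.refl i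
    | @tail b c hab hbc ihab =>
      rcases eq_or_ne b c with rfl | hne
      · exact ihab
      · exact ihab.trans (SimpleGraph.Adj.reachable ⟨hne, (hR b c).mp hbc⟩)
  obtain ⟨w⟩ := hreach
  have hp := w.toPath
  obtain ⟨p, hpath⟩ := hp
  have hlen : p.length < Fintype.card (Fin n) := hpath.length_lt
  have hlen' : (p.length : ℤ) + 1 ≤ n := by
    rw [Fintype.card_fin] at hlen
    exact_mod_cast hlen
  calc |e i - e j| < ((p.length : ℤ) + 1) * K := key i j p
    _ ≤ (n : ℤ) * K := by
        apply mul_le_mul_of_nonneg_right hlen' (le_trans zero_le_one hK)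
end

section
/- Let p ≥ 1 be a natural number and let F_p = {y ∈ ℝ | ∃ m e : ℤ, |m| < 2^p ∧ y = m·2^e}. Let m, e be integers with m ≠ 0, and let s = m·2^e. Then every breakpoint b of F_p with b ≠ s satisfies |s − b| ≥ 2^(e − p − 1). -/
/-!
A breakpoint `b` is the midpoint of its two nearest floats `f ≠ g`. If `|b|` is below
`2^e - 2^(e-p-1)`, the bound follows from `|s| ≥ 2^e` by the triangle inequality.
Otherwise `|b| ≥ 2^(e-1)`, and since `±2^(e-1)` is a float, the nearest floats `f` and `g`
also have magnitude at least `2^(e-1)`. A `p`-bit float of that magnitude has exponent at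
least `e - p`, so `f` and `g` lie in `2^(e-p)·ℤ` and `b` lies in `2^(e-p-1)·ℤ`, as does `s`.
Two distinct points of this lattice are at distance at least `2^(e-p-1)`.
-/

def floats (p : ℕ) : Set ℝ :=
  {y : ℝ | ∃ m e : ℤ, |m| < 2 ^ p ∧ y = (m : ℝ) * (2 : ℝ) ^ e}

def IsNearest (F : Set ℝ) (b f : ℝ) : Prop :=
  f ∈ F ∧ ∀ u ∈ F, |b - f| ≤ |b - u|

def IsBreakpoint (F : Set ℝ) (b : ℝ) : Prop :=
  ∃ f g : ℝ, f ≠ g ∧ IsNearest F b f ∧ IsNearest F b g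

lemma add_eq_two_mul_of_isNearest {F : Set ℝ} {b f g : ℝ} (hf : IsNearest F b f)
    (hg : IsNearest F b g) (hfg : f ≠ g) : f + g = 2 * b := by
  have hd : |b - f| = |b - g| := le_antisymm (hf.2 g hg.1) (hg.2 f hf.1)
  rcases abs_eq_abs.mp hd with h | h
  · exact absurd (by linarith) hfg
  · linarith

lemma exists_int_mul_of_mem_floats {p : ℕ} {c : ℤ} {x : ℝ} (hx : x ∈ floats p)
    (hcx : (2 : ℝ) ^ c ≤ |x|) : ∃ n : ℤ, x = n * (2 : ℝ) ^ (c + 1 - p) := by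
  obtain ⟨m, e, hm, rfl⟩ := hx
  have hlt : (2 : ℝ) ^ c < 2 ^ ((p : ℤ) + e) :=
    calc (2 : ℝ) ^ c ≤ |(m : ℝ)| * 2 ^ e := by
          rwa [abs_mul, abs_of_pos (zpow_pos two_pos e : (0 : ℝ) < 2 ^ e)] at hcx
      _ < 2 ^ p * 2 ^ e := by
          gcongr
          rw [← Int.cast_abs]
          exact_mod_cast hm
      _ = 2 ^ ((p : ℤ) + e) := by rw [zpow_add₀ two_ne_zero, zpow_natCast]
  have hce : c + 1 - p ≤ e := by
    have := (zpow_lt_zpow_iff_right₀ one_lt_two).mp hlt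
    omega
  obtain ⟨k, hk⟩ := Int.eq_ofNat_of_zero_le (sub_nonneg.mpr hce)
  refine ⟨m * 2 ^ k, ?_⟩
  rw [Int.cast_mul, Int.cast_pow, Int.cast_ofNat, mul_assoc, ← zpow_natCast,
    ← zpow_add₀ two_ne_zero]
  congr 2
  omega

lemma two_zpow_le_abs_of_isNearest {p : ℕ} (hp : 1 ≤ p) {c : ℤ} {b f : ℝ}
    (hf : IsNearest (floats p) b f) (hb : (2 : ℝ) ^ c ≤ |b|) : (2 : ℝ) ^ c ≤ |f| := by
  have hone : |(1 : ℤ)| < 2 ^ p := by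
    rw [abs_one]
    exact one_lt_two.trans_le (le_self_pow₀ one_le_two (by omega))
  obtain ⟨u, hu, hbu⟩ : ∃ u ∈ floats p, |b - u| = |b| - 2 ^ c := by
    rcases le_total 0 b with h | h
    · refine ⟨2 ^ c, ⟨1, c, hone, by simp⟩, ?_⟩
      rw [abs_of_nonneg h] at hb ⊢
      rw [abs_of_nonneg (by linarith)]
    · refine ⟨-2 ^ c, ⟨-1, c, by rwa [abs_neg], by simp⟩, ?_⟩
      rw [abs_of_nonpos h] at hb ⊢
      rw [abs_of_nonpos (by linarith)]
      ring
  linarith [hf.2 u hu, abs_sub_abs_le_abs_sub b f]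

lemma exists_int_mul_of_isBreakpoint {p : ℕ} (hp : 1 ≤ p) {e : ℤ} {b : ℝ}
    (hb : IsBreakpoint (floats p) b) (hbe : (2 : ℝ) ^ (e - 1) ≤ |b|) :
    ∃ N : ℤ, b = N * (2 : ℝ) ^ (e - p - 1) := by
  obtain ⟨f, g, hfg, hf, hg⟩ := hb
  obtain ⟨n₁, hn₁⟩ :=
    exists_int_mul_of_mem_floats hf.1 (two_zpow_le_abs_of_isNearest hp hf hbe)
  obtain ⟨n₂, hn₂⟩ :=
    exists_int_mul_of_mem_floats hg.1 (two_zpow_le_abs_of_isNearest hp hg hbe)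
  have hmid := add_eq_two_mul_of_isNearest hf hg hfg
  have hpow : (2 : ℝ) ^ (e - 1 + 1 - p) = 2 ^ (e - p - 1) * 2 := by
    rw [← zpow_add_one₀ two_ne_zero]
    ring_nf
  rw [hn₁, hn₂, hpow] at hmid
  exact ⟨n₁ + n₂, by push_cast; linarith⟩

lemma le_abs_int_mul_sub_int_mul {ε : ℝ} (hε : 0 ≤ ε) {n₁ n₂ : ℤ} (h : n₁ ≠ n₂) :
    ε ≤ |n₁ * ε - n₂ * ε| := by
  rw [← sub_mul, abs_mul, abs_of_nonneg hε, ← Int.cast_sub, ← Int.cast_abs]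
  exact le_mul_of_one_le_left hε (by exact_mod_cast Int.one_le_abs (sub_ne_zero.mpr h))

/-- Any breakpoint `b` of the set of `p`-bit floating-point values that differs from
`s = m·2^e` (with `m ≠ 0`) satisfies `|s - b| ≥ 2^(e - p - 1)`. -/
theorem stmt_10 (p : ℕ) (hp : 1 ≤ p)
    (F : Set ℝ) (hF : F = {y : ℝ | ∃ m e : ℤ, |m| < 2 ^ p ∧ y = (m : ℝ) * (2 : ℝ) ^ e})
    (m e : ℤ) (hm : m ≠ 0) (s : ℝ) (hs : s = (m : ℝ) * (2 : ℝ) ^ e)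
    (b : ℝ)
    (hb : ∃ f g : ℝ, f ∈ F ∧ g ∈ F ∧ f ≠ g ∧
      (∀ u ∈ F, |b - f| ≤ |b - u|) ∧ (∀ u ∈ F, |b - g| ≤ |b - u|))
    (hbs : b ≠ s) :
    (2 : ℝ) ^ (e - (p : ℤ) - 1) ≤ |s - b| := by
  subst hF
  obtain ⟨f, g, hfF, hgF, hfg, hf, hg⟩ := hb
  have hbreak : IsBreakpoint (floats p) b := ⟨f, g, hfg, ⟨hfF, hf⟩, ⟨hgF, hg⟩⟩
  set ε : ℝ := 2 ^ (e - p - 1)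
  have hε : ε ≤ 2 ^ (e - 1) := zpow_le_zpow_right₀ one_le_two (by omega)
  have hpow : (2 : ℝ) ^ e = 2 ^ (e - 1) * 2 := by
    rw [← zpow_add_one₀ two_ne_zero]
    ring_nf
  have hs_abs : (2 : ℝ) ^ e ≤ |s| := by
    have hpos : (0 : ℝ) < 2 ^ e := zpow_pos two_pos e
    rw [hs, abs_mul, abs_of_pos hpos, ← Int.cast_abs]
    exact le_mul_of_one_le_left hpos.le (by exact_mod_cast Int.one_le_abs hm)
  rcases le_or_gt |b| (2 ^ e - ε) with hsmall | hlarge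
  · linarith [abs_sub_abs_le_abs_sub s b]
  obtain ⟨N, rfl⟩ := exists_int_mul_of_isBreakpoint hp hbreak (by linarith)
  have hs_grid : s = ((m * 2 ^ (p + 1) : ℤ) : ℝ) * ε := by
    rw [hs, Int.cast_mul, Int.cast_pow, Int.cast_ofNat, mul_assoc, ← zpow_natCast,
      ← zpow_add₀ two_ne_zero]
    congr 2
    omega
  rw [hs_grid] at hbs ⊢
  exact le_abs_int_mul_sub_int_mul (zpow_pos two_pos _).le fun h => hbs (by rw [h])
end

section
/- Let n ≥ 1 and let x, y : Fin n → ℝ. Then for every i, |softmax(x)_i − softmax(y)_i| ≤ 2 · max_j |x_j − y_j|. That is, the softmax function is Lipschitz continuous (from the sup norm on ℝⁿ to each output coordinate) with a Lipschitz constant independent of n. -/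
open Real Finset

lemma softmax_one_side {n : ℕ} (hn : 1 ≤ n) (x y : Fin n → ℝ) (M : ℝ)
    (hM : ∀ j, x j - y j ≤ M) (hM' : ∀ j, y j - x j ≤ M) (i : Fin n) :
    Real.exp (x i) / ∑ j, Real.exp (x j) - Real.exp (y i) / ∑ j, Real.exp (y j) ≤ 2 * M := by
  haveI : NeZero n := ⟨by omega⟩
  set Sx := ∑ j, Real.exp (x j) with hSxdef
  set Sy := ∑ j, Real.exp (y j) with hSydef
  have hSx : 0 < Sx := Finset.sum_pos (fun j _ => Real.exp_pos _) Finset.univ_nonempty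
  have hSy : 0 < Sy := Finset.sum_pos (fun j _ => Real.exp_pos _) Finset.univ_nonempty
  have hM0 : 0 ≤ M := by have := hM i; have := hM' i; linarith
  have hSle : Sy ≤ Real.exp M * Sx := by
    rw [hSxdef, hSydef, Finset.mul_sum]
    refine Finset.sum_le_sum fun j _ => ?_
    rw [← Real.exp_add]
    exact Real.exp_le_exp.2 (by linarith [hM' j])
  have hyi : Real.exp (-M) * Real.exp (x i) ≤ Real.exp (y i) := by
    rw [← Real.exp_add]
    exact Real.exp_le_exp.2 (by linarith [hM i])
  have key : Real.exp (-(2*M)) * (Real.exp (x i) / Sx) ≤ Real.exp (y i) / Sy := by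
    have h1 : Real.exp (-M) * Real.exp (x i) / (Real.exp M * Sx) ≤ Real.exp (y i) / Sy :=
      div_le_div₀ (Real.exp_pos _).le hyi hSy hSle
    calc Real.exp (-(2*M)) * (Real.exp (x i) / Sx)
        = Real.exp (-M) * Real.exp (x i) / (Real.exp M * Sx) := by
          rw [show -(2*M) = -M + -M by ring, Real.exp_add]
          rw [eq_div_iff (by positivity)]
          rw [show Real.exp (-M) = (Real.exp M)⁻¹ by rw [← Real.exp_neg]]
          field_simp
      _ ≤ Real.exp (y i) / Sy := h1
  have hsx1 : Real.exp (x i) / Sx ≤ 1 := by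
    rw [div_le_one hSx]
    exact Finset.single_le_sum (fun j _ => (Real.exp_pos (x j)).le) (Finset.mem_univ i)
  have hsx0 : 0 ≤ Real.exp (x i) / Sx := by positivity
  have hexp : 1 - 2*M ≤ Real.exp (-(2*M)) := by
    linarith [Real.add_one_le_exp (-(2*M))]
  nlinarith [key, hsx1, hsx0, hexp]

/-- Softmax is Lipschitz from the sup norm on `ℝⁿ` to each output coordinate,
with Lipschitz constant `2`, independent of `n`. -/
theorem stmt_12 (n : ℕ) (hn : 1 ≤ n) (x y : Fin n → ℝ) :
    ∀ i : Fin n,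
      |Real.exp (x i) / ∑ j, Real.exp (x j) - Real.exp (y i) / ∑ j, Real.exp (y j)|
        ≤ 2 * ⨆ j : Fin n, |x j - y j| := by
  intro i
  haveI : NeZero n := ⟨by omega⟩
  set M := ⨆ j : Fin n, |x j - y j| with hMdef
  have hbdd : BddAbove (Set.range fun j : Fin n => |x j - y j|) :=
    Set.Finite.bddAbove (Set.finite_range _)
  have hMj : ∀ j, |x j - y j| ≤ M := fun j => le_ciSup hbdd j
  have hM : ∀ j, x j - y j ≤ M := fun j => (abs_le.1 (hMj j)).2
  have hM' : ∀ j, y j - x j ≤ M := fun j => by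
    have := (abs_le.1 (hMj j)).1; linarith
  rw [abs_sub_le_iff]
  exact ⟨softmax_one_side ‹1 ≤ n› x y M hM hM' i,
         softmax_one_side ‹1 ≤ n› y x M hM' hM i⟩
end
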